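/- Let Φ₁ and Φ₂ be convex growth functions with Φ₂ ∈ 𝒰, let s > 0, and let μ be a positive Borel measure on ℂ₊. Then the following are equivalent: (a) μ is an s-Φ₂∘Φ₁⁻¹-Carleson measure, i.e. there is C>0 with μ(Q_I) ≤ C / (Φ₂∘Φ₁⁻¹(1/|I|^s)) for every finite interval I ⊂ ℝ; (b) there exists a constant C>0 such that sup over z=x+iy ∈ ℂ₊ of ∫_{ℂ₊} Φ₂( Φ₁⁻¹(1/y^s) · y^{2s}/|z−w̄|^{2s} ) dμ(w) ≤ C. Moreover the constants in (a) and (b) are equivalent up to multiplicative factors depending only on Φ₂ and s. -/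

import Mathlib

open MeasureTheory Complex Set
open scoped ENNReal Real

noncomputable section

/-- The upper half-plane `ℂ₊`. -/
def UHP : Set ℂ := {z : ℂ | 0 < z.im}

/-- A growth function: a continuous nondecreasing surjection from `[0, ∞)` onto itself. -/
def IsGrowth (Φ : ℝ → ℝ) : Prop :=
  ContinuousOn Φ (Ici 0) ∧ MonotoneOn Φ (Ici 0) ∧
    MapsTo Φ (Ici 0) (Ici 0) ∧ SurjOn Φ (Ici 0) (Ici 0)

/-- Generalized inverse `Φ⁻¹(s) = inf {t ≥ 0 : Φ t ≥ s}`. -/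
def invF (Φ : ℝ → ℝ) (s : ℝ) : ℝ := sInf {t : ℝ | 0 ≤ t ∧ s ≤ Φ t}

/-- `Φ` is of upper type `q`. -/
def UpperType (Φ : ℝ → ℝ) (q : ℝ) : Prop :=
  ∃ C > (0 : ℝ), ∀ s > (0 : ℝ), ∀ t ≥ (1 : ℝ), Φ (s * t) ≤ C * t ^ q * Φ s

/-- The class `𝒰`: growth functions of some upper type `q ≥ 1` with `t ↦ Φ t / t`
nondecreasing. -/
def ClassU (Φ : ℝ → ℝ) : Prop :=
  IsGrowth Φ ∧ ∃ q ≥ (1 : ℝ), UpperType Φ q ∧ MonotoneOn (fun t => Φ t / t) (Ioi 0)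

/-- The class `𝒰̃`: members of `𝒰` of upper type `q` satisfying conditions (a1), (a2), (a3). -/
def ClassUt (Φ : ℝ → ℝ) : Prop :=
  IsGrowth Φ ∧ ∃ q ≥ (1 : ℝ), UpperType Φ q ∧ MonotoneOn (fun t => Φ t / t) (Ioi 0) ∧
    (∃ C₁ > (0 : ℝ), ∀ s > (0 : ℝ), ∀ t > (0 : ℝ), Φ (s * t) ≤ C₁ * Φ s * Φ t) ∧
    (∃ C₂ > (0 : ℝ), ∀ a ≥ (1 : ℝ), ∀ b ≥ (1 : ℝ), Φ (a / b) ≤ C₂ * Φ a / b ^ q) ∧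
    (∃ C₃ > (0 : ℝ), ∀ a b : ℝ, 0 < a → a ≤ b → b ≤ 1 → Φ (a / b) ≤ C₃ * Φ a / Φ b)

/-- The `Δ₂`-condition. -/
def Delta2 (Φ : ℝ → ℝ) : Prop := ∃ K > (1 : ℝ), ∀ t ≥ (0 : ℝ), Φ (2 * t) ≤ K * Φ t

/-- The complementary function `Ψ(s) = sup_{t ≥ 0} (st - Φ t)`, valued in `ℝ≥0∞`. -/
def complementaryFn (Φ : ℝ → ℝ) (s : ℝ) : ℝ≥0∞ :=
  ⨆ (t : ℝ) (_ : 0 ≤ t), ENNReal.ofReal (s * t - Φ t)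

/-- The `∇₂`-condition: both `Φ` and its complementary function satisfy `Δ₂`. -/
def Nabla2 (Φ : ℝ → ℝ) : Prop :=
  Delta2 Φ ∧ ∃ K > (1 : ℝ), ∀ s ≥ (0 : ℝ),
    complementaryFn Φ (2 * s) ≤ ENNReal.ofReal K * complementaryFn Φ s

/-- The Carleson square over the interval `(a, b)`. -/
def carlesonSq (a b : ℝ) : Set ℂ := {z : ℂ | z.re ∈ Ioo a b ∧ z.im ∈ Ioo 0 (b - a)}

/-- The Luxembourg (quasi)-norm of `g` in `L^Φ(μ)`. -/
def luxNorm {X : Type*} [MeasurableSpace X] (Φ : ℝ → ℝ) (μ : Measure X) (g : X → ℂ) : ℝ≥0∞ :=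
  ⨅ (l : ℝ) (_ : 0 < l ∧ ∫⁻ x, ENNReal.ofReal (Φ (‖g x‖ / l)) ∂μ ≤ 1),
    ENNReal.ofReal l

/-- The Hardy–Orlicz (Luxembourg) norm `sup_{y > 0} ‖f(· + iy)‖_{L^Φ}^{lux}`. -/
def hardyNorm (Φ : ℝ → ℝ) (f : ℂ → ℂ) : ℝ≥0∞ :=
  ⨆ (y : ℝ) (_ : 0 < y),
    luxNorm Φ (volume : Measure ℝ) (fun x => f ((x : ℂ) + (y : ℂ) * Complex.I))

/-- Membership in the Hardy–Orlicz space `H^Φ(ℂ₊)`. -/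
def MemHardy (Φ : ℝ → ℝ) (f : ℂ → ℂ) : Prop :=
  DifferentiableOn ℂ f UHP ∧ hardyNorm Φ f < ⊤

/-- The measure `dV_α = y^α dx dy` on the upper half-plane. -/
def bergMeasure (α : ℝ) : Measure ℂ :=
  ((volume : Measure ℂ).restrict UHP).withDensity fun z => ENNReal.ofReal (z.im ^ α)

/-- The Luxembourg (quasi)-norm of the Bergman–Orlicz space `A_α^Φ(ℂ₊)`. -/
def bergLux (Φ : ℝ → ℝ) (α : ℝ) (f : ℂ → ℂ) : ℝ≥0∞ := luxNorm Φ (bergMeasure α) f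

/-- Membership in the Bergman–Orlicz space `A_α^Φ(ℂ₊)`. -/
def MemBergman (Φ : ℝ → ℝ) (α : ℝ) (f : ℂ → ℂ) : Prop :=
  DifferentiableOn ℂ f UHP ∧
    ∫⁻ z, ENNReal.ofReal (Φ (‖f z‖)) ∂(bergMeasure α) < ⊤

/-- `g` is a pointwise multiplier from `H^{Φ₁}(ℂ₊)` to `A_α^{Φ₂}(ℂ₊)`. -/
def MultHB (Φ₁ Φ₂ : ℝ → ℝ) (α : ℝ) (g : ℂ → ℂ) : Prop :=
  DifferentiableOn ℂ g UHP ∧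
    ∃ C > (0 : ℝ), ∀ f : ℂ → ℂ, MemHardy Φ₁ f →
      bergLux Φ₂ α (fun z => f z * g z) ≤ ENNReal.ofReal C * hardyNorm Φ₁ f

/-- `g` is a pointwise multiplier from `A_α^{Φ₁}(ℂ₊)` to `A_β^{Φ₂}(ℂ₊)`. -/
def MultBB (Φ₁ Φ₂ : ℝ → ℝ) (α β : ℝ) (g : ℂ → ℂ) : Prop :=
  DifferentiableOn ℂ g UHP ∧
    ∃ C > (0 : ℝ), ∀ f : ℂ → ℂ, MemBergman Φ₁ α f →
      bergLux Φ₂ β (fun z => f z * g z) ≤ ENNReal.ofReal C * bergLux Φ₁ α f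

/-- Extension of a growth function to `ℝ≥0∞`. -/
def PhiE (Φ : ℝ → ℝ) (x : ℝ≥0∞) : ℝ≥0∞ :=
  if x = ⊤ then ⊤ else ENNReal.ofReal (Φ x.toReal)

/-- The Hardy–Littlewood maximal function on `ℝ`. -/
def maximalR (f : ℝ → ℂ) (x : ℝ) : ℝ≥0∞ :=
  ⨆ (a : ℝ) (b : ℝ) (_ : a ≤ x ∧ x ≤ b ∧ a < b),
    (∫⁻ s in Ioo a b, (‖f s‖₊ : ℝ≥0∞)) / ENNReal.ofReal (b - a)

/-- The nontangential maximal function `f*` of `f : ℂ₊ → ℂ`. -/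
def ntMax (f : ℂ → ℂ) (x : ℝ) : ℝ≥0∞ :=
  ⨆ (z : ℂ) (_ : 0 < z.im ∧ |z.re - x| < z.im), (‖f z‖₊ : ℝ≥0∞)

/-- The Luxembourg norm of the nontangential maximal function `f*` in `L^Φ(ℝ)`. -/
def ntLux (Φ : ℝ → ℝ) (f : ℂ → ℂ) : ℝ≥0∞ :=
  ⨅ (l : ℝ) (_ : 0 < l ∧ ∫⁻ x, PhiE Φ (ntMax f x / ENNReal.ofReal l) ≤ 1), ENNReal.ofReal l

/-- The weighted Hardy–Littlewood maximal function `𝓜_α` on `ℂ₊`. -/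
def maximalBerg (α : ℝ) (f : ℂ → ℂ) (z : ℂ) : ℝ≥0∞ :=
  ⨆ (a : ℝ) (b : ℝ) (_ : a < b ∧ z ∈ carlesonSq a b),
    (∫⁻ w in carlesonSq a b, (‖f w‖₊ : ℝ≥0∞) ∂(bergMeasure α)) /
      bergMeasure α (carlesonSq a b)

/-- The function `Φ₃(t) = 1 / (Φ₂ ∘ Φ₁⁻¹)(1/t)` for `t > 0`, `Φ₃(0) = 0`. -/
def Phi3 (Φ₁ Φ₂ : ℝ → ℝ) (t : ℝ) : ℝ :=
  if t ≤ 0 then 0 else 1 / Φ₂ (invF Φ₁ (1 / t))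

/-- The Beta function `B(m, n) = ∫₀^∞ u^{m-1}/(1+u)^{m+n} du`. -/
def betaFn (m n : ℝ) : ℝ := ∫ u in Ioi (0 : ℝ), u ^ (m - 1) / (1 + u) ^ (m + n)

section Helpers

variable {Φ : ℝ → ℝ}

lemma growth_zero (h : IsGrowth Φ) : Φ 0 = 0 := by
  obtain ⟨t₀, ht₀, hΦt₀⟩ := h.2.2.2 (mem_Ici.2 (le_refl (0:ℝ)))
  exact le_antisymm (hΦt₀ ▸ h.2.1 (mem_Ici.2 le_rfl) ht₀ ht₀) (h.2.2.1 (mem_Ici.2 le_rfl))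

lemma growth_set_nonempty (h : IsGrowth Φ) {u : ℝ} (hu : 0 ≤ u) :
    {t : ℝ | 0 ≤ t ∧ u ≤ Φ t}.Nonempty := by
  obtain ⟨t₀, ht₀, hΦt₀⟩ := h.2.2.2 (mem_Ici.2 hu)
  exact ⟨t₀, ht₀, hΦt₀.ge⟩

lemma invF_le (h : IsGrowth Φ) {u t : ℝ} (ht : 0 ≤ t) (hΦt : u ≤ Φ t) : invF Φ u ≤ t :=
  csInf_le ⟨0, fun _ hx => hx.1⟩ ⟨ht, hΦt⟩

lemma le_invF (h : IsGrowth Φ) {u c : ℝ} (hu : 0 ≤ u)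
    (hc : ∀ t, 0 ≤ t → u ≤ Φ t → c ≤ t) : c ≤ invF Φ u :=
  le_csInf (growth_set_nonempty h hu) (fun t ht => hc t ht.1 ht.2)

lemma invF_spec (h : IsGrowth Φ) {u : ℝ} (hu : 0 < u) :
    0 < invF Φ u ∧ Φ (invF Φ u) = u := by
  set S := {t : ℝ | 0 ≤ t ∧ u ≤ Φ t} with hS
  have hclosed : IsClosed S := by
    have : S = Ici 0 ∩ Φ ⁻¹' (Ici u) := by ext t; simp [hS, and_comm]
    rw [this]
    exact h.1.preimage_isClosed_of_isClosed isClosed_Ici isClosed_Ici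
  have hne : S.Nonempty := growth_set_nonempty h hu.le
  have hbdd : BddBelow S := ⟨0, fun _ hx => hx.1⟩
  have hmem : invF Φ u ∈ S := hclosed.csInf_mem hne hbdd
  have hτ0 : 0 ≤ invF Φ u := hmem.1
  have hτpos : 0 < invF Φ u := by
    rcases hτ0.lt_or_eq with h' | h'
    · exact h'
    · exfalso
      have := hmem.2
      rw [← h', growth_zero h] at this
      linarith
  refine ⟨hτpos, le_antisymm ?_ hmem.2⟩
  by_contra hgt
  push_neg at hgt
  have hcont : ContinuousWithinAt Φ (Ici 0) (invF Φ u) := h.1 _ (mem_Ici.2 hτ0)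
  have hev : ∀ᶠ t in nhdsWithin (invF Φ u) (Ici 0), u < Φ t :=
    hcont.eventually (eventually_gt_nhds hgt)
  have hle : nhdsWithin (invF Φ u) (Ico 0 (invF Φ u)) ≤ nhdsWithin (invF Φ u) (Ici 0) :=
    nhdsWithin_mono _ Ico_subset_Ici_self
  have hnb : (nhdsWithin (invF Φ u) (Ico 0 (invF Φ u))).NeBot := by
    rw [← mem_closure_iff_nhdsWithin_neBot, closure_Ico hτpos.ne]
    exact ⟨hτ0, le_rfl⟩
  have hev' : ∀ᶠ t in nhdsWithin (invF Φ u) (Ico 0 (invF Φ u)), u < Φ t := hle hev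
  have hev2 : ∀ᶠ t in nhdsWithin (invF Φ u) (Ico 0 (invF Φ u)),
      u < Φ t ∧ t ∈ Ico 0 (invF Φ u) :=
    hev'.and eventually_mem_nhdsWithin
  obtain ⟨t, htu, ht0, htτ⟩ := hev2.exists
  exact absurd (invF_le h ht0 htu.le) (not_le.2 htτ)

lemma growth_pos (h : IsGrowth Φ) {C₂ q : ℝ}
    (hut : ∀ s > (0 : ℝ), ∀ t ≥ (1 : ℝ), Φ (s * t) ≤ C₂ * t ^ q * Φ s)
    {a : ℝ} (ha : 0 < a) : 0 < Φ a := by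
  rcases (mem_Ici.1 (h.2.2.1 (mem_Ici.2 ha.le))).lt_or_eq with h' | h'
  · exact h'
  exfalso
  obtain ⟨t, ht0, hΦt⟩ := h.2.2.2 (mem_Ici.2 (zero_le_one : (0:ℝ) ≤ 1))
  rcases le_or_gt t a with hta | hta
  · have := h.2.1 (mem_Ici.2 ht0) (mem_Ici.2 ha.le) hta
    rw [hΦt, ← h'] at this; linarith
  · have h1 : (1:ℝ) ≤ t / a := (one_le_div ha).2 hta.le
    have := hut a ha (t / a) h1
    rw [mul_div_cancel₀ _ ha.ne', hΦt, ← h'] at this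
    simp at this; linarith

lemma convex_small (h1g : IsGrowth Φ) (h1c : ConvexOn ℝ (Ici 0) Φ)
    {T t : ℝ} (hT : 0 < T) (ht : 0 ≤ t) (htT : t ≤ T) : Φ t ≤ (t / T) * Φ T := by
  have hb0 : 0 ≤ t / T := by positivity
  have hb1 : t / T ≤ 1 := (div_le_one hT).2 htT
  have key := h1c.2 (mem_Ici.2 (le_refl (0:ℝ))) (mem_Ici.2 hT.le)
    (by linarith : (0:ℝ) ≤ 1 - t / T) hb0 (by ring)
  have harg : (1 - t / T) • (0:ℝ) + (t / T) • T = t := by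
    rw [smul_eq_mul, smul_eq_mul, mul_zero, zero_add, div_mul_cancel₀ _ hT.ne']
  rw [harg] at key
  calc Φ t ≤ (1 - t / T) • Φ 0 + (t / T) • Φ T := key
    _ = (t / T) * Φ T := by rw [growth_zero h1g]; simp [smul_eq_mul]

end Helpers

section Helpers2

variable {Φ Φ₁ Φ₂ : ℝ → ℝ}

lemma invF_scale (h1g : IsGrowth Φ₁) (h1c : ConvexOn ℝ (Ici 0) Φ₁)
    {u l : ℝ} (hu : 0 < u) (hl0 : 0 < l) (hl1 : l ≤ 1) :
    l * invF Φ₁ u ≤ invF Φ₁ (l * u) := by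
  obtain ⟨hT, hΦT⟩ := invF_spec h1g hu
  set T := invF Φ₁ u with hTdef
  refine le_invF h1g (by positivity) (fun t ht0 hΦt => ?_)
  by_contra hlt
  push_neg at hlt
  have htT : t ≤ T := le_trans hlt.le (by nlinarith)
  have := convex_small h1g h1c hT ht0 htT
  rw [hΦT] at this
  have h1 : t / T < l := (div_lt_iff₀ hT).2 (by linarith [mul_comm l T])
  nlinarith

lemma phi_scale (h2g : IsGrowth Φ₂) {q C₂ : ℝ}
    (hmono : MonotoneOn (fun t => Φ₂ t / t) (Ioi 0))
    (hut : ∀ s > (0 : ℝ), ∀ t ≥ (1 : ℝ), Φ₂ (s * t) ≤ C₂ * t ^ q * Φ₂ s)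
    {B r : ℝ} (hB : 0 < B) (hr : 0 < r) :
    Φ₂ (r * B) ≤ max C₂ 1 * max r (r ^ q) * Φ₂ B := by
  have hΦB : 0 ≤ Φ₂ B := h2g.2.2.1 (mem_Ici.2 hB.le)
  rcases le_or_gt r 1 with hr1 | hr1
  · have hq := hmono (mem_Ioi.2 (by positivity : (0:ℝ) < r * B)) (mem_Ioi.2 hB)
      (by nlinarith)
    simp only at hq
    have : Φ₂ (r * B) ≤ r * Φ₂ B := by
      rw [div_le_div_iff₀ (by positivity) hB] at hq
      nlinarith
    calc Φ₂ (r * B) ≤ r * Φ₂ B := this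
      _ ≤ max C₂ 1 * max r (r ^ q) * Φ₂ B := by
          refine mul_le_mul_of_nonneg_right ?_ hΦB
          calc r ≤ max r (r ^ q) := le_max_left _ _
            _ = 1 * max r (r ^ q) := (one_mul _).symm
            _ ≤ max C₂ 1 * max r (r ^ q) := mul_le_mul_of_nonneg_right
                (le_max_right _ _) (le_trans hr.le (le_max_left _ _))
  · have := hut B hB r hr1.le
    rw [mul_comm B r] at this
    calc Φ₂ (r * B) ≤ C₂ * r ^ q * Φ₂ B := this
      _ ≤ max C₂ 1 * max r (r ^ q) * Φ₂ B := by
          refine mul_le_mul_of_nonneg_right ?_ hΦB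
          exact mul_le_mul (le_max_left _ _) (le_max_right _ _)
            (Real.rpow_nonneg hr.le q) (le_trans zero_le_one (le_max_right _ _))

lemma exists_dyadic {y d : ℝ} (hy : 0 < y) (hd : y ≤ d) :
    ∃ k : ℕ, (2:ℝ) ^ k * y ≤ d ∧ d < 2 ^ (k + 1) * y := by
  have hP : ∃ n : ℕ, d < 2 ^ (n + 1) * y := by
    obtain ⟨n, hn⟩ := pow_unbounded_of_one_lt (d / y) (one_lt_two (α := ℝ))
    exact ⟨n, by rw [div_lt_iff₀ hy] at hn; calc d < 2 ^ n * y := hn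
      _ ≤ 2 ^ (n + 1) * y := by
          have : (2:ℝ) ^ n ≤ 2 ^ (n + 1) := pow_le_pow_right₀ one_le_two (Nat.le_succ n)
          nlinarith⟩
  classical
  refine ⟨Nat.find hP, ?_, Nat.find_spec hP⟩
  rcases Nat.eq_zero_or_pos (Nat.find hP) with h0 | h0
  · rw [h0]; simpa using hd
  · have := Nat.find_min hP (Nat.sub_lt h0 one_pos)
    push_neg at this
    have heq : Nat.find hP - 1 + 1 = Nat.find hP := Nat.succ_pred_eq_of_pos h0
    rw [heq] at this
    exact this

lemma setLIntegral_le_const {μ : Measure ℂ} {s : Set ℂ} (hs : MeasurableSet s)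
    {f : ℂ → ℝ≥0∞} {M : ℝ≥0∞} (h : ∀ x ∈ s, f x ≤ M) :
    ∫⁻ x in s, f x ∂μ ≤ M * μ s := by
  rw [← lintegral_indicator hs, ← lintegral_indicator_const hs M]
  refine lintegral_mono (fun x => ?_)
  by_cases hx : x ∈ s
  · simp only [Set.indicator_of_mem hx]; exact h x hx
  · simp [Set.indicator_of_notMem hx]

lemma const_le_setLIntegral {μ : Measure ℂ} {s : Set ℂ} (hs : MeasurableSet s)
    {f : ℂ → ℝ≥0∞} {M : ℝ≥0∞} (h : ∀ x ∈ s, M ≤ f x) :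
    M * μ s ≤ ∫⁻ x in s, f x ∂μ := by
  rw [← lintegral_indicator hs, ← lintegral_indicator_const hs M]
  refine lintegral_mono (fun x => ?_)
  by_cases hx : x ∈ s
  · simp only [Set.indicator_of_mem hx]; exact h x hx
  · simp [Set.indicator_of_notMem hx]

end Helpers2


/-- Characterization of `s`-`Φ₂∘Φ₁⁻¹`-Carleson measures, with equivalence of constants
(the factor `κ` depends only on `Φ₂` and `s`). -/
theorem s_phi_carleson_characterization
    (Φ₁ Φ₂ : ℝ → ℝ) (s : ℝ) (hs : 0 < s)
    (h1g : IsGrowth Φ₁) (h2g : IsGrowth Φ₂)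
    (h1c : ConvexOn ℝ (Ici 0) Φ₁) (h2c : ConvexOn ℝ (Ici 0) Φ₂)
    (h2U : ClassU Φ₂) :
    ∃ κ > (0 : ℝ), ∀ μ : Measure ℂ,
      ((∃ C > (0 : ℝ), ∀ a b : ℝ, a < b →
          μ (carlesonSq a b) ≤ ENNReal.ofReal (C / Φ₂ (invF Φ₁ (1 / (b - a) ^ s)))) ↔
        (∃ C > (0 : ℝ), ∀ z ∈ UHP,
          ∫⁻ w in UHP, ENNReal.ofReal
              (Φ₂ (invF Φ₁ (1 / z.im ^ s) * z.im ^ (2 * s) /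
                ‖z - (starRingEnd ℂ) w‖ ^ (2 * s))) ∂μ
            ≤ ENNReal.ofReal C)) ∧
      ∀ C > (0 : ℝ),
        ((∀ a b : ℝ, a < b →
            μ (carlesonSq a b) ≤ ENNReal.ofReal (C / Φ₂ (invF Φ₁ (1 / (b - a) ^ s)))) →
          ∀ z ∈ UHP,
            ∫⁻ w in UHP, ENNReal.ofReal
                (Φ₂ (invF Φ₁ (1 / z.im ^ s) * z.im ^ (2 * s) /
                  ‖z - (starRingEnd ℂ) w‖ ^ (2 * s))) ∂μ
              ≤ ENNReal.ofReal (κ * C)) ∧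
        ((∀ z ∈ UHP,
            ∫⁻ w in UHP, ENNReal.ofReal
                (Φ₂ (invF Φ₁ (1 / z.im ^ s) * z.im ^ (2 * s) /
                  ‖z - (starRingEnd ℂ) w‖ ^ (2 * s))) ∂μ
              ≤ ENNReal.ofReal C) →
          ∀ a b : ℝ, a < b →
            μ (carlesonSq a b) ≤ ENNReal.ofReal (κ * C / Φ₂ (invF Φ₁ (1 / (b - a) ^ s)))) := by
  
  obtain ⟨-, q, hq1, ⟨C₂, hC₂, hut⟩, hmono⟩ := h2U
  have hs2 : (0:ℝ) < 2 * s := by linarith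
  set ρ : ℝ := (2:ℝ) ^ (-s) with hρdef
  have hρ0 : 0 < ρ := Real.rpow_pos_of_pos two_pos _
  have hρ1 : ρ < 1 := Real.rpow_lt_one_of_one_lt_of_neg one_lt_two (by linarith)
  have h1ρ : 0 < 1 - ρ := by linarith
  set K₂ : ℝ := (2:ℝ) ^ (s * (2 * q + 1)) with hK₂def
  have hK₂0 : 0 < K₂ := Real.rpow_pos_of_pos two_pos _
  set C₂' : ℝ := max C₂ 1 with hC₂'def
  have hC₂'0 : 0 < C₂' := lt_of_lt_of_le one_pos (le_max_right _ _)
  set κ₁ : ℝ := C₂' * K₂ * (1 - ρ)⁻¹ with hκ₁def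
  have hκ₁0 : 0 < κ₁ := by rw [hκ₁def]; exact mul_pos (mul_pos hC₂'0 hK₂0) (inv_pos.2 h1ρ)
  set κ₂ : ℝ := C₂ * ((9:ℝ) ^ s) ^ q with hκ₂def
  have hκ₂0 : 0 < κ₂ :=
    mul_pos hC₂ (Real.rpow_pos_of_pos (Real.rpow_pos_of_pos (by norm_num) s) q)
  have hκ0 : 0 < κ₁ + κ₂ := by linarith
  refine ⟨κ₁ + κ₂, hκ0, fun μ => ?_⟩
  -- Direction (a) → (b)
  have H1 : ∀ C > (0:ℝ),
      (∀ a b : ℝ, a < b → μ (carlesonSq a b) ≤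
          ENNReal.ofReal (C / Φ₂ (invF Φ₁ (1 / (b - a) ^ s)))) →
      ∀ z ∈ UHP, ∫⁻ w in UHP, ENNReal.ofReal
          (Φ₂ (invF Φ₁ (1 / z.im ^ s) * z.im ^ (2 * s) /
            ‖z - (starRingEnd ℂ) w‖ ^ (2 * s))) ∂μ
        ≤ ENNReal.ofReal ((κ₁ + κ₂) * C) := by
    intro C hC hcar z hz
    have hy : 0 < z.im := hz
    set y := z.im with hydef
    have hys : 0 < y ^ s := Real.rpow_pos_of_pos hy s
    have hu : 0 < 1 / y ^ s := div_pos one_pos hys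
    obtain ⟨ht0, htΦ⟩ := invF_spec h1g hu
    set t := invF Φ₁ (1 / y ^ s) with htdef
    have hFc : Continuous fun w : ℂ => ‖z - (starRingEnd ℂ) w‖ :=
      continuous_norm.comp (continuous_const.sub Complex.continuous_conj)
    set A : ℕ → Set ℂ := fun k =>
      {w : ℂ | 0 < w.im ∧ (2:ℝ)^k * y ≤ ‖z - (starRingEnd ℂ) w‖ ∧
        ‖z - (starRingEnd ℂ) w‖ < 2^(k+1) * y} with hAdef
    have hAmeas : ∀ k, MeasurableSet (A k) := by
      intro k
      have : A k = Complex.im ⁻¹' Ioi 0 ∩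
          (fun w : ℂ => ‖z - (starRingEnd ℂ) w‖) ⁻¹'
            Ico ((2:ℝ)^k * y) (2^(k+1) * y) := by
        ext w
        simp only [hAdef, mem_setOf_eq, mem_inter_iff, mem_preimage, mem_Ioi, mem_Ico]
      rw [this]
      exact (Complex.measurable_im measurableSet_Ioi).inter
        (hFc.measurable measurableSet_Ico)
    have hcover : UHP ⊆ ⋃ k, A k := by
      intro w hw
      have hwim : 0 < w.im := hw
      have him : (z - (starRingEnd ℂ) w).im = y + w.im := by
        simp [Complex.sub_im, Complex.conj_im]; rfl
      have hyd : y ≤ ‖z - (starRingEnd ℂ) w‖ := by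
        have h1 := Complex.abs_im_le_norm (z - (starRingEnd ℂ) w)
        rw [him] at h1
        have h2 := le_trans (le_abs_self _) h1
        linarith
      obtain ⟨k, hk1, hk2⟩ := exists_dyadic hy hyd
      exact mem_iUnion.2 ⟨k, hwim, hk1, hk2⟩
    have hterm : ∀ k : ℕ, ∫⁻ w in A k, ENNReal.ofReal
        (Φ₂ (t * y ^ (2 * s) / ‖z - (starRingEnd ℂ) w‖ ^ (2 * s))) ∂μ ≤
        ENNReal.ofReal ((C₂' * K₂ * C) * ρ ^ k) := by
      intro k
      have h2k : (0:ℝ) < 2^k := by positivity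
      have h2k1 : (0:ℝ) < 2^(k+1) := by positivity
      have h2ks : (0:ℝ) < ((2:ℝ)^k)^(2*s) := Real.rpow_pos_of_pos h2k _
      -- pointwise bound on the annulus
      have hpt : ∀ w ∈ A k, ENNReal.ofReal
          (Φ₂ (t * y ^ (2 * s) / ‖z - (starRingEnd ℂ) w‖ ^ (2 * s))) ≤
          ENNReal.ofReal (Φ₂ (t / ((2:ℝ)^k)^(2*s))) := by
        intro w hw
        obtain ⟨hwim, hd1, hd2⟩ := hw
        have hd0 : 0 < ‖z - (starRingEnd ℂ) w‖ :=
          lt_of_lt_of_le (mul_pos h2k hy) hd1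
        have hsplit : ((2:ℝ)^k * y)^(2*s) = ((2:ℝ)^k)^(2*s) * y^(2*s) :=
          Real.mul_rpow h2k.le hy.le
        have hdr : ((2:ℝ)^k)^(2*s) * y^(2*s) ≤
            ‖z - (starRingEnd ℂ) w‖ ^ (2*s) := by
          rw [← hsplit]; exact Real.rpow_le_rpow (mul_pos h2k hy).le hd1 hs2.le
        have h1 : t * y^(2*s) / ‖z - (starRingEnd ℂ) w‖ ^ (2*s) ≤
            t * y^(2*s) / (((2:ℝ)^k)^(2*s) * y^(2*s)) := by
          gcongr
        have h2 : t * y^(2*s) / (((2:ℝ)^k)^(2*s) * y^(2*s)) = t / ((2:ℝ)^k)^(2*s) := by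
          rw [mul_div_mul_comm, div_self (ne_of_gt (Real.rpow_pos_of_pos hy _)), mul_one]
        rw [h2] at h1
        exact ENNReal.ofReal_le_ofReal
          (h2g.2.1 (mem_Ici.2 (div_nonneg (mul_nonneg ht0.le
              (Real.rpow_nonneg hy.le _)) (Real.rpow_nonneg (norm_nonneg _) _)))
            (mem_Ici.2 (div_nonneg ht0.le h2ks.le)) h1)
      -- inclusion into a Carleson square
      have hsub : A k ⊆ carlesonSq (z.re - 2^(k+1)*y) (z.re + 2^(k+1)*y) := by
        intro w hw
        obtain ⟨hwim, hd1, hd2⟩ := hw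
        have hre : (z - (starRingEnd ℂ) w).re = z.re - w.re := by
          simp [Complex.sub_re, Complex.conj_re]
        have him : (z - (starRingEnd ℂ) w).im = y + w.im := by
          simp [Complex.sub_im, Complex.conj_im]; rfl
        have h1 : |z.re - w.re| ≤ ‖z - (starRingEnd ℂ) w‖ := by
          rw [← hre]; exact Complex.abs_re_le_norm _
        have h2 : |z.re - w.re| < 2^(k+1)*y := lt_of_le_of_lt h1 hd2
        rw [abs_lt] at h2
        have h3 : y + w.im ≤ ‖z - (starRingEnd ℂ) w‖ := by
          have := Complex.abs_im_le_norm (z - (starRingEnd ℂ) w)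
          rw [him] at this
          exact le_trans (le_abs_self _) this
        have h4 : w.im < 2^(k+1)*y := by
          have := lt_of_le_of_lt h3 hd2; linarith
        have hP : (0:ℝ) < 2^(k+1)*y := mul_pos h2k1 hy
        refine ⟨⟨by linarith [h2.1], by linarith [h2.2]⟩, hwim, ?_⟩
        have : (z.re + 2^(k+1)*y) - (z.re - 2^(k+1)*y) = 2*(2^(k+1)*y) := by ring
        rw [this]; linarith
      have hQ := hcar (z.re - 2^(k+1)*y) (z.re + 2^(k+1)*y)
        (by have := mul_pos h2k1 hy; linarith)
      have hba : (z.re + 2^(k+1)*y) - (z.re - 2^(k+1)*y) = 2^(k+2)*y := by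
        rw [pow_succ]; ring
      rw [hba] at hQ
      set lam : ℝ := (((2:ℝ)^(k+2))^s)⁻¹ with hlamdef
      have hlam0 : 0 < lam := inv_pos.2 (Real.rpow_pos_of_pos (by positivity) s)
      have hlam1 : lam ≤ 1 := by
        rw [hlamdef]
        have h1 : (1:ℝ) ≤ ((2:ℝ)^(k+2))^s :=
          Real.one_le_rpow (one_le_pow₀ one_le_two) hs.le
        exact inv_le_one_of_one_le₀ h1
      have hlamu : 1 / ((2:ℝ)^(k+2) * y)^s = lam * (1/y^s) := by
        rw [Real.mul_rpow (by positivity) hy.le, hlamdef]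
        field_simp
      rw [hlamu] at hQ
      have hτle := invF_scale h1g h1c hu hlam0 hlam1
      set τ := invF Φ₁ (lam * (1/y^s)) with hτdef
      have hτ0 : 0 ≤ τ := (invF_spec h1g (mul_pos hlam0 hu)).1.le
      have hΦB : 0 < Φ₂ (lam * t) := growth_pos h2g hut (mul_pos hlam0 ht0)
      have hΦle : Φ₂ (lam * t) ≤ Φ₂ τ :=
        h2g.2.1 (mem_Ici.2 (mul_pos hlam0 ht0).le) (mem_Ici.2 hτ0) hτle
      have hΦτ : 0 < Φ₂ τ := lt_of_lt_of_le hΦB hΦle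
      set r : ℝ := (2:ℝ) ^ (((2:ℝ) - (k:ℝ)) * s) with hrdef
      have hr0 : 0 < r := Real.rpow_pos_of_pos two_pos _
      have hrB : r * (lam * t) = t / ((2:ℝ)^k)^(2*s) := by
        have e1 : ((2:ℝ)^(k+2))^s = (2:ℝ)^(((k:ℝ)+2)*s) := by
          rw [← Real.rpow_natCast 2 (k+2), ← Real.rpow_mul (by norm_num : (0:ℝ) ≤ 2)]
          push_cast; ring_nf
        have e2 : ((2:ℝ)^k)^(2*s) = (2:ℝ)^((k:ℝ)*(2*s)) := by
          rw [← Real.rpow_natCast 2 k, ← Real.rpow_mul (by norm_num : (0:ℝ) ≤ 2)]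
        rw [hrdef, hlamdef, e1, e2, ← Real.rpow_neg (by norm_num : (0:ℝ) ≤ 2),
          div_eq_mul_inv, ← Real.rpow_neg (by norm_num : (0:ℝ) ≤ 2)]
        rw [show (2:ℝ) ^ (((2:ℝ) - (k:ℝ)) * s) * ((2:ℝ) ^ (-(((k:ℝ)+2)*s)) * t) =
          ((2:ℝ) ^ (((2:ℝ) - (k:ℝ)) * s) * (2:ℝ) ^ (-(((k:ℝ)+2)*s))) * t from by ring,
          ← Real.rpow_add two_pos]
        rw [show ((2:ℝ) - (k:ℝ)) * s + -(((k:ℝ)+2)*s) = -((k:ℝ)*(2*s)) from by ring]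
        ring
      have hmax : max r (r ^ q) ≤ K₂ * ρ ^ k := by
        have hKρ : K₂ * ρ ^ k = (2:ℝ)^(s*(2*q+1) + (-s)*(k:ℝ)) := by
          rw [Real.rpow_add two_pos, hK₂def, hρdef]
          congr 1
          rw [← Real.rpow_natCast ((2:ℝ)^(-s)) k,
            ← Real.rpow_mul (by norm_num : (0:ℝ) ≤ 2)]
        rw [hKρ]
        apply max_le
        · rw [hrdef, Real.rpow_le_rpow_left_iff one_lt_two]
          linarith [mul_le_mul_of_nonneg_left hq1 hs.le,
            mul_nonneg hs.le (le_trans zero_le_one hq1)]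
        · have hrq : r ^ q = (2:ℝ)^((((2:ℝ)-(k:ℝ))*s)*q) := by
            rw [hrdef, ← Real.rpow_mul (by norm_num : (0:ℝ) ≤ 2)]
          rw [hrq, Real.rpow_le_rpow_left_iff one_lt_two]
          linarith [mul_nonneg (mul_nonneg (Nat.cast_nonneg k : (0:ℝ) ≤ (k:ℕ)) hs.le)
              (sub_nonneg.2 hq1), hs.le]
      have hM : Φ₂ (t / ((2:ℝ)^k)^(2*s)) ≤ C₂' * (K₂ * ρ^k) * Φ₂ τ := by
        have hsc := phi_scale h2g hmono hut (B := lam * t) (mul_pos hlam0 ht0) hr0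
        rw [hrB] at hsc
        calc Φ₂ (t / ((2:ℝ)^k)^(2*s)) ≤ C₂' * max r (r^q) * Φ₂ (lam*t) := hsc
          _ ≤ C₂' * (K₂ * ρ^k) * Φ₂ τ :=
            mul_le_mul (mul_le_mul_of_nonneg_left hmax hC₂'0.le) hΦle hΦB.le
              (mul_nonneg hC₂'0.le (mul_nonneg hK₂0.le (pow_nonneg hρ0.le k)))
      calc ∫⁻ w in A k, ENNReal.ofReal
            (Φ₂ (t * y ^ (2 * s) / ‖z - (starRingEnd ℂ) w‖ ^ (2 * s))) ∂μ
          ≤ ENNReal.ofReal (Φ₂ (t / ((2:ℝ)^k)^(2*s))) * μ (A k) :=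
            setLIntegral_le_const (hAmeas k) hpt
        _ ≤ ENNReal.ofReal (Φ₂ (t / ((2:ℝ)^k)^(2*s))) * ENNReal.ofReal (C / Φ₂ τ) :=
            mul_le_mul_right (le_trans (measure_mono hsub) hQ) _
        _ = ENNReal.ofReal (Φ₂ (t / ((2:ℝ)^k)^(2*s)) * (C / Φ₂ τ)) :=
            (ENNReal.ofReal_mul (h2g.2.2.1 (mem_Ici.2 (div_nonneg ht0.le h2ks.le)))).symm
        _ ≤ ENNReal.ofReal ((C₂' * K₂ * C) * ρ ^ k) := by
            apply ENNReal.ofReal_le_ofReal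
            calc Φ₂ (t / ((2:ℝ)^k)^(2*s)) * (C / Φ₂ τ)
                ≤ (C₂' * (K₂ * ρ^k) * Φ₂ τ) * (C / Φ₂ τ) :=
                  mul_le_mul_of_nonneg_right hM (div_nonneg hC.le hΦτ.le)
              _ = (C₂' * K₂ * C) * ρ ^ k := by
                  field_simp
    calc ∫⁻ w in UHP, ENNReal.ofReal
          (Φ₂ (t * y ^ (2 * s) / ‖z - (starRingEnd ℂ) w‖ ^ (2 * s))) ∂μ
        ≤ ∫⁻ w in ⋃ k, A k, ENNReal.ofReal
          (Φ₂ (t * y ^ (2 * s) / ‖z - (starRingEnd ℂ) w‖ ^ (2 * s))) ∂μ :=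
          lintegral_mono' (Measure.restrict_mono hcover le_rfl) le_rfl
      _ ≤ ∑' k, ∫⁻ w in A k, ENNReal.ofReal
          (Φ₂ (t * y ^ (2 * s) / ‖z - (starRingEnd ℂ) w‖ ^ (2 * s))) ∂μ :=
          lintegral_iUnion_le _ _
      _ ≤ ∑' k : ℕ, ENNReal.ofReal ((C₂' * K₂ * C) * ρ ^ k) := ENNReal.tsum_le_tsum hterm
      _ = ENNReal.ofReal (C₂' * K₂ * C) * ∑' k : ℕ, ENNReal.ofReal (ρ ^ k) := by
          rw [← ENNReal.tsum_mul_left]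
          exact tsum_congr fun k => ENNReal.ofReal_mul
            (mul_nonneg (mul_nonneg hC₂'0.le hK₂0.le) hC.le)
      _ = ENNReal.ofReal (C₂' * K₂ * C) * ENNReal.ofReal ((1 - ρ)⁻¹) := by
          rw [← ENNReal.ofReal_tsum_of_nonneg (fun n => pow_nonneg hρ0.le n)
            (summable_geometric_of_lt_one hρ0.le hρ1),
            tsum_geometric_of_lt_one hρ0.le hρ1]
      _ ≤ ENNReal.ofReal ((κ₁ + κ₂) * C) := by
          rw [← ENNReal.ofReal_mul (mul_nonneg (mul_nonneg hC₂'0.le hK₂0.le) hC.le)]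
          apply ENNReal.ofReal_le_ofReal
          have heq : C₂' * K₂ * C * (1-ρ)⁻¹ = κ₁ * C := by rw [hκ₁def]; ring
          rw [heq]
          exact mul_le_mul_of_nonneg_right (le_add_of_nonneg_right hκ₂0.le) hC.le
  -- Direction (b) → (a)
  have H2 : ∀ C > (0:ℝ),
      (∀ z ∈ UHP, ∫⁻ w in UHP, ENNReal.ofReal
          (Φ₂ (invF Φ₁ (1 / z.im ^ s) * z.im ^ (2 * s) /
            ‖z - (starRingEnd ℂ) w‖ ^ (2 * s))) ∂μ
        ≤ ENNReal.ofReal C) →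
      ∀ a b : ℝ, a < b → μ (carlesonSq a b) ≤
        ENNReal.ofReal ((κ₁ + κ₂) * C / Φ₂ (invF Φ₁ (1 / (b - a) ^ s))) := by
    intro C hC hint a b hab
    set L := b - a with hLdef
    have hL : 0 < L := by rw [hLdef]; linarith
    have hLs : 0 < L ^ s := Real.rpow_pos_of_pos hL s
    have hu : 0 < 1 / L ^ s := div_pos one_pos hLs
    obtain ⟨ht0, htΦ⟩ := invF_spec h1g hu
    set t := invF Φ₁ (1 / L ^ s) with htdef
    have h9s : (0:ℝ) < (9:ℝ) ^ s := Real.rpow_pos_of_pos (by norm_num) s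
    have h9s1 : (1:ℝ) ≤ (9:ℝ) ^ s := Real.one_le_rpow (by norm_num) hs.le
    have hm : 0 < Φ₂ (t / 9 ^ s) := growth_pos h2g hut (div_pos ht0 h9s)
    set m := Φ₂ (t / 9 ^ s) with hmdef
    set z : ℂ := ⟨(a + b) / 2, L⟩ with hzdef
    have hzre : z.re = (a + b) / 2 := rfl
    have hzim : z.im = L := rfl
    have hzU : z ∈ UHP := by
      show 0 < z.im
      rw [hzim]; exact hL
    have hQsub : carlesonSq a b ⊆ UHP := fun w hw => hw.2.1
    have hQmeas : MeasurableSet (carlesonSq a b) :=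
      (Complex.measurable_re measurableSet_Ioo).inter
        (Complex.measurable_im measurableSet_Ioo)
    have hlow : ∀ w ∈ carlesonSq a b, ENNReal.ofReal m ≤
        ENNReal.ofReal (Φ₂ (invF Φ₁ (1 / z.im ^ s) * z.im ^ (2 * s) /
          ‖z - (starRingEnd ℂ) w‖ ^ (2 * s))) := by
      intro w hw
      obtain ⟨⟨hw1, hw2⟩, hw3, hw4⟩ := hw
      rw [← hLdef] at hw4
      rw [hzim]
      have him : (z - (starRingEnd ℂ) w).im = L + w.im := by
        simp [Complex.sub_im, Complex.conj_im, hzim]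
      have hre : (z - (starRingEnd ℂ) w).re = (a + b) / 2 - w.re := by
        simp [Complex.sub_re, Complex.conj_re, hzre]
      have hd0 : 0 < ‖z - (starRingEnd ℂ) w‖ := by
        have h1 := Complex.abs_im_le_norm (z - (starRingEnd ℂ) w)
        rw [him] at h1
        have h2 := le_trans (le_abs_self _) h1
        linarith
      have hd3L : ‖z - (starRingEnd ℂ) w‖ ≤ 3 * L := by
        have h1 := Complex.norm_le_abs_re_add_abs_im (z - (starRingEnd ℂ) w)
        rw [him, hre] at h1
        have h2 : |(a + b) / 2 - w.re| ≤ L / 2 := by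
          rw [abs_le]
          constructor <;> [skip; skip] <;> rw [hLdef] at * <;> [linarith; linarith]
        have h3 : |L + w.im| ≤ 2 * L := by
          rw [abs_le]
          constructor
          · linarith
          · linarith
        linarith
      have hds : ‖z - (starRingEnd ℂ) w‖ ^ (2 * s) ≤ 9 ^ s * L ^ (2 * s) := by
        have h1 : ‖z - (starRingEnd ℂ) w‖ ^ (2*s) ≤ (3 * L) ^ (2*s) :=
          Real.rpow_le_rpow hd0.le hd3L hs2.le
        have h2 : ((3:ℝ) * L) ^ (2*s) = 3 ^ (2*s) * L ^ (2*s) :=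
          Real.mul_rpow (by norm_num) hL.le
        have h3 : (3:ℝ) ^ (2*s) = 9 ^ s := by
          rw [Real.rpow_mul (by norm_num : (0:ℝ) ≤ 3)]
          congr 1
          rw [show (2:ℝ) = ((2:ℕ):ℝ) by norm_num, Real.rpow_natCast]
          norm_num
        rw [h2, h3] at h1
        exact h1
      have hdpos : 0 < ‖z - (starRingEnd ℂ) w‖ ^ (2*s) :=
        Real.rpow_pos_of_pos hd0 _
      have harg : t / 9 ^ s ≤ t * L ^ (2*s) / ‖z - (starRingEnd ℂ) w‖ ^ (2*s) := by
        rw [div_le_div_iff₀ h9s hdpos]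
        calc t * ‖z - (starRingEnd ℂ) w‖ ^ (2*s)
            ≤ t * (9^s * L^(2*s)) := mul_le_mul_of_nonneg_left hds ht0.le
          _ = t * L^(2*s) * 9^s := by ring
      exact ENNReal.ofReal_le_ofReal
        (h2g.2.1 (mem_Ici.2 (div_pos ht0 h9s).le)
          (mem_Ici.2 (div_nonneg (mul_nonneg ht0.le
            (Real.rpow_nonneg hL.le _)) hdpos.le)) harg)
    have hkey : ENNReal.ofReal m * μ (carlesonSq a b) ≤ ENNReal.ofReal C := by
      refine le_trans (const_le_setLIntegral hQmeas hlow) (le_trans ?_ (hint z hzU))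
      exact lintegral_mono' (Measure.restrict_mono hQsub le_rfl) le_rfl
    have hμ : μ (carlesonSq a b) ≤ ENNReal.ofReal (C / m) := by
      rw [ENNReal.ofReal_div_of_pos hm,
        ENNReal.le_div_iff_mul_le (Or.inl (ENNReal.ofReal_pos.2 hm).ne')
          (Or.inl ENNReal.ofReal_ne_top), mul_comm]
      exact hkey
    refine le_trans hμ (ENNReal.ofReal_le_ofReal ?_)
    have hΦt : 0 < Φ₂ t := growth_pos h2g hut ht0
    have hup : Φ₂ t ≤ κ₂ * m := by
      have h1 : t / 9^s * 9^s = t := div_mul_cancel₀ _ (ne_of_gt h9s)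
      have h2 := hut (t / 9^s) (div_pos ht0 h9s) (9^s) h9s1
      rw [h1] at h2
      calc Φ₂ t ≤ C₂ * (9^s)^q * Φ₂ (t/9^s) := h2
        _ = κ₂ * m := by rw [hκ₂def, hmdef]
    rw [div_le_div_iff₀ hm hΦt]
    calc C * Φ₂ t ≤ C * (κ₂ * m) := mul_le_mul_of_nonneg_left hup hC.le
      _ ≤ (κ₁ + κ₂) * C * m := by
          have h' : κ₂ * (C * m) ≤ (κ₁ + κ₂) * (C * m) :=
            mul_le_mul_of_nonneg_right (by linarith) (mul_nonneg hC.le hm.le)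
          linarith [h']
  refine ⟨⟨?_, ?_⟩, fun C hC => ⟨H1 C hC, H2 C hC⟩⟩
  · rintro ⟨C, hC, h⟩
    exact ⟨(κ₁ + κ₂) * C, mul_pos hκ0 hC, H1 C hC h⟩
  · rintro ⟨C, hC, h⟩
    exact ⟨(κ₁ + κ₂) * C, mul_pos hκ0 hC, H2 C hC h⟩
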